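/- arXiv:1607.08640 — 3 statements merged into one kernel-verified Lean document; each statement's English description precedes it below -/
import Mathlib

section
/- If H^∞_v(G) is a nontrivial Banach space, then the boundary ∂G of G is contained in the closure of E_v in ℂ. -/
open Complex Metric Set Filter Topology MeasureTheory

noncomputable section

/-- `f` is holomorphic on `G` and `sup_{z in G} v z * |f z| < ∞`. -/
def MemHv (G : Set ℂ) (v : ℂ → ℝ) (f : ℂ → ℂ) : Prop :=
  DifferentiableOn ℂ f G ∧ ∃ C : ℝ, ∀ z ∈ G, v z * ‖f z‖ ≤ C

/-- The weighted sup-seminorm `‖f‖_v`. -/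
def HvNorm (G : Set ℂ) (v : ℂ → ℝ) (f : ℂ → ℂ) : ℝ :=
  sSup ((fun z => v z * ‖f z‖) '' G)

/-- A `‖·‖_v`-Cauchy sequence. -/
def HvCauchy (G : Set ℂ) (v : ℂ → ℝ) (F : ℕ → ℂ → ℂ) : Prop :=
  ∀ ε : ℝ, 0 < ε → ∃ N : ℕ, ∀ m ≥ N, ∀ n ≥ N, ∀ z ∈ G,
    v z * ‖F m z - F n z‖ ≤ ε

/-- Convergence in the `‖·‖_v`-seminorm. -/
def HvTendsto (G : Set ℂ) (v : ℂ → ℝ) (F : ℕ → ℂ → ℂ) (f : ℂ → ℂ) : Prop :=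
  ∀ ε : ℝ, 0 < ε → ∃ N : ℕ, ∀ n ≥ N, ∀ z ∈ G,
    v z * ‖F n z - f z‖ ≤ ε

/-- Completeness of `H^∞_v(G)`: every Cauchy sequence converges in the space. -/
def HvComplete (G : Set ℂ) (v : ℂ → ℝ) : Prop :=
  ∀ F : ℕ → ℂ → ℂ, (∀ n, MemHv G v (F n)) → HvCauchy G v F →
    ∃ f : ℂ → ℂ, MemHv G v f ∧ HvTendsto G v F f

/-- The seminorm `‖·‖_v` is a norm: `‖f‖_v = 0` forces `f = 0` on `G`. -/
def HvNormed (G : Set ℂ) (v : ℂ → ℝ) : Prop :=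
  ∀ f : ℂ → ℂ, MemHv G v f → (∀ z ∈ G, v z * ‖f z‖ = 0) →
    ∀ z ∈ G, f z = 0

/-- `H^∞_v(G)` is a Banach space. -/
def IsBanachHv (G : Set ℂ) (v : ℂ → ℝ) : Prop :=
  HvNormed G v ∧ HvComplete G v

/-!
Suppose a boundary point `ζ` has a disc `B(ζ, r)` free of points of positive weight, and pick
`p ∈ G ∩ B(ζ, r)` where a nonzero `f ∈ H^∞_v(G)` does not vanish. With `φ z = (p - ζ) / (z - ζ)`,
holomorphic on `G`, one has `‖φ‖ ≤ q < 1` wherever `v > 0`, so the partial sums of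
`f · ∑ φᵏ` form a `‖·‖_v`-Cauchy sequence; its limit `g ∈ H^∞_v(G)` satisfies
`g (1 - φ) = f` wherever `v > 0`. The holomorphic function `g (1 - φ) - f` thus has
`‖·‖_v`-norm zero, hence vanishes on `G`, while at `z = p` it equals `-f p ≠ 0`.
-/

lemma norm_geom_sum_Ico_le {x : ℂ} {q : ℝ} (hx : ‖x‖ ≤ q) (hq : q < 1) (n m : ℕ) :
    ‖∑ k ∈ Finset.Ico n m, x ^ k‖ ≤ q ^ n / (1 - q) :=
  calc ‖∑ k ∈ Finset.Ico n m, x ^ k‖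
      ≤ ∑ k ∈ Finset.Ico n m, ‖x‖ ^ k := by
        simpa only [norm_pow] using norm_sum_le (Finset.Ico n m) (x ^ ·)
    _ ≤ ∑ k ∈ Finset.Ico n m, q ^ k :=
        Finset.sum_le_sum fun k _ => pow_le_pow_left₀ (norm_nonneg x) hx k
    _ ≤ q ^ n / (1 - q) := geom_sum_Ico_le_of_lt_one ((norm_nonneg x).trans hx) hq

lemma DifferentiableOn.closure_subset_closure_ne_zero {G : Set ℂ} {f : ℂ → ℂ} (hG : IsOpen G)
    (hGc : IsPreconnected G) (hf : DifferentiableOn ℂ f G) {z₀ : ℂ} (hz₀ : z₀ ∈ G)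
    (hfz₀ : f z₀ ≠ 0) : closure G ⊆ closure {z ∈ G | f z ≠ 0} := by
  refine closure_minimal (fun z hz => ?_) isClosed_closure
  by_contra hzS
  have hf0 : f =ᶠ[𝓝 z] 0 := by
    filter_upwards [hG.mem_nhds hz, not_frequently.mp (mt mem_closure_iff_frequently.mpr hzS)]
      with w hwG hwS
    simpa [hwG] using hwS
  exact hfz₀ ((hf.analyticOnNhd hG).eqOn_zero_of_preconnected_of_eventuallyEq_zero hGc hz hf0 hz₀)

section Weighted

variable {G : Set ℂ} {v : ℂ → ℝ}

lemma HvCauchy.of_bound {F : ℕ → ℂ → ℂ} {b : ℕ → ℝ} (hb : Tendsto b atTop (𝓝 0))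
    (hF : ∀ n m, n ≤ m → ∀ z ∈ G, v z * ‖F m z - F n z‖ ≤ b n) : HvCauchy G v F := by
  intro ε hε
  obtain ⟨N, hN⟩ := eventually_atTop.mp (hb.eventually (ge_mem_nhds hε))
  refine ⟨N, fun m hm n hn z hz => ?_⟩
  rcases le_total n m with hnm | hmn
  · exact (hF n m hnm z hz).trans (hN n hn)
  · rw [← norm_neg, neg_sub]
    exact (hF m n hmn z hz).trans (hN m hm)

lemma HvTendsto.tendsto_apply {F : ℕ → ℂ → ℂ} {g : ℂ → ℂ} (hF : HvTendsto G v F g) {z : ℂ}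
    (hz : z ∈ G) (hvz : 0 < v z) : Tendsto (F · z) atTop (𝓝 (g z)) := by
  refine Metric.tendsto_atTop.mpr fun ε hε => ?_
  obtain ⟨N, hN⟩ := hF (v z * (ε / 2)) (by positivity)
  refine ⟨N, fun n hn => ?_⟩
  have := le_of_mul_le_mul_left (hN n hn z hz) hvz
  rw [dist_eq_norm]
  linarith

lemma HvNormed.eq_zero_of_eq_zero_of_pos (hN : HvNormed G v) (hv : ∀ z ∈ G, 0 ≤ v z)
    {f : ℂ → ℂ} (hf : DifferentiableOn ℂ f G) (h0 : ∀ z ∈ G, 0 < v z → f z = 0) :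
    ∀ z ∈ G, f z = 0 := by
  have hnorm : ∀ z ∈ G, v z * ‖f z‖ = 0 := fun z hz => by
    rcases (hv z hz).lt_or_eq with hvz | hvz
    · simp [h0 z hz hvz]
    · simp [← hvz]
  exact hN f ⟨hf, 0, fun z hz => (hnorm z hz).le⟩ hnorm

lemma weighted_norm_mul_geom_sum_Ico_le (hv : ∀ z ∈ G, 0 ≤ v z) {f φ : ℂ → ℂ} {C q : ℝ}
    (hC : ∀ z ∈ G, v z * ‖f z‖ ≤ C) (hq₀ : 0 ≤ q) (hq : q < 1) (hφ : ∀ z ∈ G, 0 < v z → ‖φ z‖ ≤ q)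
    (n m : ℕ) {z : ℂ} (hz : z ∈ G) :
    v z * ‖f z * ∑ k ∈ Finset.Ico n m, φ z ^ k‖ ≤ C * (q ^ n / (1 - q)) := by
  rcases (hv z hz).lt_or_eq with hvz | hvz
  · rw [norm_mul, ← mul_assoc]
    exact mul_le_mul (hC z hz) (norm_geom_sum_Ico_le (hφ z hz hvz) hq n m) (norm_nonneg _)
      ((mul_nonneg hvz.le (norm_nonneg _)).trans (hC z hz))
  · have hC₀ : 0 ≤ C := (mul_nonneg (hv z hz) (norm_nonneg _)).trans (hC z hz)
    rw [← hvz, zero_mul]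
    exact mul_nonneg hC₀ (div_nonneg (pow_nonneg hq₀ n) (sub_nonneg.mpr hq.le))

lemma HvComplete.exists_mul_one_sub_eq (hB : HvComplete G v) (hv : ∀ z ∈ G, 0 ≤ v z)
    {f φ : ℂ → ℂ} (hf : MemHv G v f) (hφ : DifferentiableOn ℂ φ G) {q : ℝ} (hq₀ : 0 ≤ q)
    (hq : q < 1) (hφq : ∀ z ∈ G, 0 < v z → ‖φ z‖ ≤ q) :
    ∃ g, MemHv G v g ∧ ∀ z ∈ G, 0 < v z → g z * (1 - φ z) = f z := by
  obtain ⟨hfd, C, hC⟩ := hf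
  set F : ℕ → ℂ → ℂ := fun N z => f z * ∑ k ∈ Finset.range N, φ z ^ k
  have hbound := weighted_norm_mul_geom_sum_Ico_le hv hC hq₀ hq hφq
  have hFmem : ∀ N, MemHv G v (F N) := fun N =>
    ⟨hfd.mul (DifferentiableOn.fun_sum fun k _ => hφ.pow k), _,
      fun z hz => by simpa [F] using hbound 0 N hz⟩
  have hFcauchy : HvCauchy G v F := by
    refine HvCauchy.of_bound (b := fun n => C * (q ^ n / (1 - q))) ?_
      fun n m hnm z hz => ?_
    · simpa using
        ((tendsto_pow_atTop_nhds_zero_of_lt_one hq₀ hq).div_const (1 - q)).const_mul C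
    · simpa [F, ← mul_sub, Finset.sum_Ico_eq_sub _ hnm] using hbound n m hz
  obtain ⟨g, hg, hFg⟩ := hB F hFmem hFcauchy
  refine ⟨g, hg, fun z hz hvz => ?_⟩
  have hφz : ‖φ z‖ < 1 := (hφq z hz hvz).trans_lt hq
  have hlim : Tendsto (F · z) atTop (𝓝 (f z * (1 - φ z)⁻¹)) :=
    (hasSum_geometric_of_norm_lt_one hφz).tendsto_sum_nat.const_mul (f z)
  rw [tendsto_nhds_unique (hFg.tendsto_apply hz hvz) hlim, mul_assoc,
    inv_mul_cancel₀ (sub_ne_zero.mpr fun h => by simp [← h] at hφz), mul_one]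

end Weighted

theorem stmt10 (G : Set ℂ) (v : ℂ → ℝ) (hG : IsOpen G) (hGc : IsConnected G)
    (hv : ∀ z ∈ G, 0 ≤ v z) (hB : IsBanachHv G v)
    (hne : ∃ f : ℂ → ℂ, MemHv G v f ∧ ∃ z ∈ G, f z ≠ 0) :
    frontier G ⊆ closure {w ∈ G | 0 < v w} := by
  intro ζ hζ
  by_contra hζE
  obtain ⟨f, hf, z₀, hz₀, hfz₀⟩ := hne
  rw [hG.frontier_eq] at hζ
  obtain ⟨hζG, hζG'⟩ := hζ
  obtain ⟨r, hr, hrE⟩ : ∃ r > 0, ∀ z ∈ G, 0 < v z → r ≤ dist z ζ := by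
    simpa [Metric.mem_closure_iff, dist_comm] using hζE
  obtain ⟨p, ⟨hpG, hfp⟩, hpζ⟩ := Metric.mem_closure_iff.mp
    (hf.1.closure_subset_closure_ne_zero hG hGc.isPreconnected hz₀ hfz₀ hζG) r hr
  rw [dist_comm] at hpζ
  set φ : ℂ → ℂ := fun z => (p - ζ) / (z - ζ)
  have hφ : DifferentiableOn ℂ φ G :=
    (differentiableOn_const _).div (differentiableOn_id.sub_const ζ)
      fun z hz => sub_ne_zero.mpr fun h => hζG' (h ▸ hz)
  have hφq : ∀ z ∈ G, 0 < v z → ‖φ z‖ ≤ dist p ζ / r := fun z hz hvz => by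
    rw [norm_div, ← dist_eq_norm, ← dist_eq_norm]
    exact div_le_div_of_nonneg_left dist_nonneg hr (hrE z hz hvz)
  obtain ⟨g, hg, hgφ⟩ := hB.2.exists_mul_one_sub_eq hv hf hφ (by positivity)
    ((div_lt_one hr).mpr hpζ) hφq
  have hφp : φ p = 1 := div_self (sub_ne_zero.mpr fun h => hζG' (h ▸ hpG))
  have hD : DifferentiableOn ℂ (fun z => g z * (1 - φ z) - f z) G :=
    (hg.1.mul ((differentiableOn_const 1).sub hφ)).sub hf.1
  have hDp := hB.1.eq_zero_of_eq_zero_of_pos hv hD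
    (fun z hz hvz => sub_eq_zero.mpr (hgφ z hz hvz)) p hpG
  simp [hφp, hfp] at hDp
end
end

section
/- Suppose that for each z ∈ G there is a bounded open set U ⊆ G with z ∈ U, ∂U ⊆ E_v, and inf_{ζ∈∂U} v(ζ) > 0. Then H^∞_v(G) is a Banach space. -/
open Complex Metric Set Filter Topology MeasureTheory

noncomputable section

/-!
The hypothesis makes the weighted norm control the sup norm locally: if `v ≥ c > 0` on `∂U`
and `v |g| ≤ C` on `G`, then `|g| ≤ C / c` on `∂U`, hence on `closure U` by the maximum modulus
principle. So a `‖·‖_v`-Cauchy sequence of holomorphic functions is locally uniformly Cauchy;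
its pointwise limit is therefore a locally uniform limit, hence holomorphic, and it is the
`‖·‖_v`-limit by the usual argument. The same local estimate with `C = 0` shows that `‖·‖_v`
is a norm.
-/

theorem mul_norm_le_of_forall_mem_frontier {U : Set ℂ} {v : ℂ → ℝ} {g : ℂ → ℂ} {c C : ℝ}
    (hU : Bornology.IsBounded U) (hg : DiffContOnCl ℂ g U) (hc : 0 < c)
    (hcv : ∀ ζ ∈ frontier U, c ≤ v ζ) (hC : ∀ ζ ∈ frontier U, v ζ * ‖g ζ‖ ≤ C)
    {w : ℂ} (hw : w ∈ closure U) : c * ‖g w‖ ≤ C := by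
  rw [mul_comm, ← le_div_iff₀ hc]
  refine Complex.norm_le_of_forall_mem_frontier_norm_le hU hg (fun ζ hζ => ?_) hw
  rw [le_div_iff₀ hc, mul_comm]
  exact (mul_le_mul_of_nonneg_right (hcv ζ hζ) (norm_nonneg _)).trans (hC ζ hζ)

def WeightDominatesLocally (G : Set ℂ) (v : ℂ → ℝ) : Prop :=
  ∀ z ∈ G, ∃ U ∈ 𝓝 z, U ⊆ G ∧ ∃ c > (0 : ℝ), ∀ g : ℂ → ℂ, DifferentiableOn ℂ g G →
    ∀ C : ℝ, (∀ w ∈ G, v w * ‖g w‖ ≤ C) → ∀ w ∈ U, c * ‖g w‖ ≤ C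

theorem weightDominatesLocally_of_frontier {G : Set ℂ} {v : ℂ → ℝ}
    (h : ∀ z ∈ G, ∃ U : Set ℂ, IsOpen U ∧ Bornology.IsBounded U ∧ U ⊆ G ∧
      z ∈ U ∧ frontier U ⊆ {w ∈ G | 0 < v w} ∧
      ∃ c > (0:ℝ), ∀ ζ ∈ frontier U, c ≤ v ζ) :
    WeightDominatesLocally G v := by
  intro z hz
  obtain ⟨U, hUo, hUb, hUG, hzU, hfr, c, hc, hcv⟩ := h z hz
  have hclG : closure U ⊆ G := by
    rw [closure_eq_self_union_frontier]
    exact union_subset hUG fun w hw => (hfr hw).1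
  refine ⟨U, hUo.mem_nhds hzU, hUG, c, hc, fun g hg C hC w hw => ?_⟩
  exact mul_norm_le_of_forall_mem_frontier hUb ⟨hg.mono hUG, hg.continuousOn.mono hclG⟩ hc hcv
    (fun ζ hζ => hC ζ (hfr hζ).1) (subset_closure hw)

namespace WeightDominatesLocally

variable {G : Set ℂ} {v : ℂ → ℝ}

theorem hvNormed (hloc : WeightDominatesLocally G v) : HvNormed G v := by
  intro f hf hf0 z hz
  obtain ⟨U, hzU, -, c, hc, hest⟩ := hloc z hz
  have hcf : c * ‖f z‖ ≤ 0 :=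
    hest f hf.1 0 (fun w hw => (hf0 w hw).le) z (mem_of_mem_nhds hzU)
  exact norm_le_zero_iff.mp (nonpos_of_mul_nonpos_right hcf hc)

theorem exists_uniformCauchySeqOn (hloc : WeightDominatesLocally G v) {F : ℕ → ℂ → ℂ}
    (hF : ∀ n, DifferentiableOn ℂ (F n) G) (hFc : HvCauchy G v F) {z : ℂ} (hz : z ∈ G) :
    ∃ U ∈ 𝓝 z, U ⊆ G ∧ UniformCauchySeqOn F atTop U := by
  obtain ⟨U, hzU, hUG, c, hc, hest⟩ := hloc z hz
  refine ⟨U, hzU, hUG, Metric.uniformCauchySeqOn_iff.mpr fun ε hε => ?_⟩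
  obtain ⟨N, hN⟩ := hFc (ε * c / 2) (by positivity)
  refine ⟨N, fun m hm n hn w hw => ?_⟩
  have hcw : c * ‖F m w - F n w‖ ≤ ε * c / 2 :=
    hest _ ((hF m).sub (hF n)) _ (hN m hm n hn) w hw
  rw [dist_eq_norm]
  nlinarith

end WeightDominatesLocally

theorem HvCauchy.hvTendsto_of_tendsto {G : Set ℂ} {v : ℂ → ℝ} {F : ℕ → ℂ → ℂ} {f : ℂ → ℂ}
    (hFc : HvCauchy G v F) (hlim : ∀ z ∈ G, Tendsto (fun n => F n z) atTop (𝓝 (f z))) :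
    HvTendsto G v F f := by
  intro ε hε
  obtain ⟨N, hN⟩ := hFc ε hε
  refine ⟨N, fun n hn z hz => ?_⟩
  have hconv : Tendsto (fun m => v z * ‖F n z - F m z‖) atTop (𝓝 (v z * ‖F n z - f z‖)) :=
    ((tendsto_const_nhds.sub (hlim z hz)).norm).const_mul (v z)
  exact le_of_tendsto hconv (eventually_atTop.mpr ⟨N, fun m hm => hN n hn m hm z hz⟩)

theorem HvTendsto.exists_bound {G : Set ℂ} {v : ℂ → ℝ} {F : ℕ → ℂ → ℂ} {f : ℂ → ℂ}
    (hv : ∀ z ∈ G, 0 ≤ v z) (hF : ∀ n, MemHv G v (F n)) (hFf : HvTendsto G v F f) :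
    ∃ C : ℝ, ∀ z ∈ G, v z * ‖f z‖ ≤ C := by
  obtain ⟨N, hN⟩ := hFf 1 one_pos
  obtain ⟨C, hC⟩ := (hF N).2
  refine ⟨C + 1, fun z hz => ?_⟩
  calc v z * ‖f z‖ ≤ v z * (‖F N z‖ + ‖F N z - f z‖) :=
        mul_le_mul_of_nonneg_left (norm_le_insert _ _) (hv z hz)
    _ = v z * ‖F N z‖ + v z * ‖F N z - f z‖ := mul_add _ _ _
    _ ≤ C + 1 := add_le_add (hC z hz) (hN N le_rfl z hz)

theorem WeightDominatesLocally.hvComplete {G : Set ℂ} {v : ℂ → ℝ}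
    (hloc : WeightDominatesLocally G v) (hG : IsOpen G) (hv : ∀ z ∈ G, 0 ≤ v z) :
    HvComplete G v := by
  intro F hF hFc
  have hunif := fun z (hz : z ∈ G) => hloc.exists_uniformCauchySeqOn (fun n => (hF n).1) hFc hz
  set f : ℂ → ℂ := fun z => limUnder atTop fun n => F n z
  have hlim : ∀ z ∈ G, Tendsto (fun n => F n z) atTop (𝓝 (f z)) := fun z hz => by
    obtain ⟨U, hzU, -, hU⟩ := hunif z hz
    exact (hU.cauchySeq (mem_of_mem_nhds hzU)).tendsto_limUnder
  have hlocunif : TendstoLocallyUniformlyOn F f atTop G := by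
    refine tendstoLocallyUniformlyOn_of_forall_exists_nhds fun z hz => ?_
    obtain ⟨U, hzU, hUG, hU⟩ := hunif z hz
    exact ⟨U, mem_nhdsWithin_of_mem_nhds hzU,
      hU.tendstoUniformlyOn_of_tendsto fun w hw => hlim w (hUG hw)⟩
  have hFf : HvTendsto G v F f := hFc.hvTendsto_of_tendsto hlim
  exact ⟨f, ⟨hlocunif.differentiableOn (.of_forall fun n => (hF n).1) hG,
    hFf.exists_bound hv hF⟩, hFf⟩

theorem stmt13_general (G : Set ℂ) (v : ℂ → ℝ) (hG : IsOpen G)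
    (hv : ∀ z ∈ G, 0 ≤ v z)
    (h : ∀ z ∈ G, ∃ U : Set ℂ, IsOpen U ∧ Bornology.IsBounded U ∧ U ⊆ G ∧
      z ∈ U ∧ frontier U ⊆ {w ∈ G | 0 < v w} ∧
      ∃ c > (0:ℝ), ∀ ζ ∈ frontier U, c ≤ v ζ) :
    IsBanachHv G v :=
  have hloc := weightDominatesLocally_of_frontier h
  ⟨hloc.hvNormed, hloc.hvComplete hG hv⟩

theorem stmt13 (G : Set ℂ) (v : ℂ → ℝ) (hG : IsOpen G) (hGc : IsConnected G)
    (hv : ∀ z ∈ G, 0 ≤ v z)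
    (h : ∀ z ∈ G, ∃ U : Set ℂ, IsOpen U ∧ Bornology.IsBounded U ∧ U ⊆ G ∧
      z ∈ U ∧ frontier U ⊆ {w ∈ G | 0 < v w} ∧
      ∃ c > (0:ℝ), ∀ ζ ∈ frontier U, c ≤ v ζ) :
    IsBanachHv G v :=
  stmt13_general G v hG hv h
end
end

section
/- Let v be a weight on G such that the closure of G \ E_v is a compact subset of G and inf_{z∈K} v(z) > 0 for each compact set K ⊆ G \ cl(G \ E_v). Then H^∞_v(G) is a Banach space. -/
open Complex Metric Set Filter Topology MeasureTheory

noncomputable section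

/-!
On a compact set `K ⊆ G`, a `‖·‖_v`-Cauchy sequence of holomorphic functions is uniformly
Cauchy: choose an open `U ⊇ cl(G \ E_v)` with compact closure in `G`; on the compact set
`(K \ U) ∪ ∂U`, which avoids `cl(G \ E_v)`, the weight is bounded below, and on `U` the maximum
modulus principle transfers the estimate from `∂U`. Hence the sequence converges locally uniformly
to a holomorphic limit, which is also its `‖·‖_v`-limit. The seminorm is a norm because `v > 0` on
the nonempty open set `G \ cl(G \ E_v)` and holomorphic functions on a domain vanishing on an open
set vanish identically.
-/

section UniformCauchy

variable {ι α β : Type*}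

theorem UniformCauchySeqOn.union [UniformSpace β] {F : ι → α → β} {p : Filter ι}
    {s t : Set α} (hs : UniformCauchySeqOn F p s) (ht : UniformCauchySeqOn F p t) :
    UniformCauchySeqOn F p (s ∪ t) := fun u hu =>
  ((hs u hu).and (ht u hu)).mono fun _ h x hx => hx.elim (h.1 x) (h.2 x)

theorem tendstoLocallyUniformlyOn_limUnder_of_uniformCauchySeqOn [Nonempty ι] [SemilatticeSup ι]
    [TopologicalSpace α] [LocallyCompactSpace α] [UniformSpace β] [CompleteSpace β] [Nonempty β]
    {F : ι → α → β} {G : Set α} (hG : IsOpen G)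
    (hF : ∀ K ⊆ G, IsCompact K → UniformCauchySeqOn F atTop K) :
    TendstoLocallyUniformlyOn F (fun x => limUnder atTop (F · x)) atTop G := by
  rw [tendstoLocallyUniformlyOn_iff_forall_isCompact hG]
  intro K hKG hK
  exact (hF K hKG hK).tendstoUniformlyOn_of_tendsto fun x hx =>
    ((hF K hKG hK).cauchySeq hx).tendsto_limUnder

theorem uniformCauchySeqOn_closure_of_frontier [Nonempty ι] [SemilatticeSup ι]
    {V E : Type*} [NormedAddCommGroup V] [NormedSpace ℂ V] [Nontrivial V]
    [NormedAddCommGroup E] [NormedSpace ℂ E] {F : ι → V → E} {U : Set V}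
    (hU : Bornology.IsBounded U) (hF : ∀ n, DiffContOnCl ℂ (F n) U)
    (h : UniformCauchySeqOn F atTop (frontier U)) : UniformCauchySeqOn F atTop (closure U) := by
  rw [Metric.uniformCauchySeqOn_iff] at h ⊢
  intro ε hε
  obtain ⟨N, hN⟩ := h (ε / 2) (half_pos hε)
  refine ⟨N, fun m hm n hn z hz => ?_⟩
  have hmax : ‖F m z - F n z‖ ≤ ε / 2 :=
    Complex.norm_le_of_forall_mem_frontier_norm_le hU ((hF m).sub (hF n))
      (fun w hw => by simpa [dist_eq_norm] using (hN m hm n hn w hw).le) hz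
  rw [dist_eq_norm]
  linarith

end UniformCauchy

theorem diff_nonempty_of_isCompact {X : Type*} [TopologicalSpace X] [T2Space X]
    [PreconnectedSpace X] [NoncompactSpace X] {G A : Set X} (hG : IsOpen G) (hGne : G.Nonempty)
    (hA : IsCompact A) (hAG : A ⊆ G) : (G \ A).Nonempty := by
  rw [nonempty_iff_ne_empty, Ne, sdiff_eq_empty]
  intro hGA
  have hGeq : G = A := hGA.antisymm hAG
  have hclopen : IsClopen G := ⟨hGeq ▸ hA.isClosed, hG⟩
  exact noncompact_univ X (hclopen.eq_univ hGne ▸ hGeq ▸ hA)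

section Hv

variable {G : Set ℂ} {v : ℂ → ℝ}

theorem hvNormed_of_pos_on_isOpen (hG : IsOpen G) (hGc : IsPreconnected G) {U : Set ℂ}
    (hU : IsOpen U) (hUne : U.Nonempty) (hUG : U ⊆ G) (hvU : ∀ z ∈ U, 0 < v z) :
    HvNormed G v := by
  intro f hf hzero z hz
  obtain ⟨z₀, hz₀⟩ := hUne
  have hfU : f =ᶠ[𝓝 z₀] 0 := by
    filter_upwards [hU.mem_nhds hz₀] with w hw
    simpa [(hvU w hw).ne'] using hzero w (hUG hw)
  exact (hf.1.analyticOnNhd hG).eqOn_zero_of_preconnected_of_eventuallyEq_zero hGc (hUG hz₀)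
    hfU hz

variable {F : ℕ → ℂ → ℂ}

theorem HvCauchy.uniformCauchySeqOn (hC : HvCauchy G v F) {K : Set ℂ} (hKG : K ⊆ G) {c : ℝ}
    (hc : 0 < c) (hcK : ∀ z ∈ K, c ≤ v z) : UniformCauchySeqOn F atTop K := by
  rw [Metric.uniformCauchySeqOn_iff]
  intro ε hε
  obtain ⟨N, hN⟩ := hC (c * (ε / 2)) (by positivity)
  refine ⟨N, fun m hm n hn z hz => ?_⟩
  have hcz : c * ‖F m z - F n z‖ ≤ c * (ε / 2) :=
    (mul_le_mul_of_nonneg_right (hcK z hz) (norm_nonneg _)).trans (hN m hm n hn z (hKG hz))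
  rw [dist_eq_norm]
  linarith [le_of_mul_le_mul_left hcz hc]

theorem HvCauchy.hvTendsto (hC : HvCauchy G v F) {f : ℂ → ℂ}
    (hf : ∀ z ∈ G, Tendsto (F · z) atTop (𝓝 (f z))) : HvTendsto G v F f := by
  intro ε hε
  obtain ⟨N, hN⟩ := hC ε hε
  refine ⟨N, fun n hn z hz => ?_⟩
  have hlim : Tendsto (fun m => v z * ‖F n z - F m z‖) atTop (𝓝 (v z * ‖F n z - f z‖)) :=
    ((tendsto_const_nhds.sub (hf z hz)).norm).const_mul _
  exact le_of_tendsto hlim ((eventually_ge_atTop N).mono fun m hm => hN n hn m hm z hz)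

theorem MemHv.of_hvTendsto (hv : ∀ z ∈ G, 0 ≤ v z) (hF : ∀ n, MemHv G v (F n)) {f : ℂ → ℂ}
    (hf : DifferentiableOn ℂ f G) (h : HvTendsto G v F f) : MemHv G v f := by
  obtain ⟨N, hN⟩ := h 1 one_pos
  obtain ⟨C, hC⟩ := (hF N).2
  refine ⟨hf, C + 1, fun z hz => ?_⟩
  calc v z * ‖f z‖ ≤ v z * (‖F N z‖ + ‖F N z - f z‖) :=
        mul_le_mul_of_nonneg_left (norm_le_norm_add_norm_sub (F N z) (f z)) (hv z hz)
    _ = v z * ‖F N z‖ + v z * ‖F N z - f z‖ := mul_add _ _ _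
    _ ≤ C + 1 := add_le_add (hC z hz) (hN N le_rfl z hz)

theorem hvComplete_of_uniformCauchySeqOn (hG : IsOpen G) (hv : ∀ z ∈ G, 0 ≤ v z)
    (hloc : ∀ F : ℕ → ℂ → ℂ, (∀ n, DifferentiableOn ℂ (F n) G) → HvCauchy G v F →
      ∀ K ⊆ G, IsCompact K → UniformCauchySeqOn F atTop K) :
    HvComplete G v := by
  intro F hF hC
  have hlim := tendstoLocallyUniformlyOn_limUnder_of_uniformCauchySeqOn hG
    (hloc F (fun n => (hF n).1) hC)
  have hdiff := hlim.differentiableOn (Eventually.of_forall fun n => (hF n).1) hG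
  have htends := hC.hvTendsto fun z hz => hlim.tendsto_at hz
  exact ⟨_, MemHv.of_hvTendsto hv hF hdiff htends, htends⟩

theorem HvCauchy.uniformCauchySeqOn_of_isCompact (hG : IsOpen G) {A : Set ℂ} (hA : IsCompact A)
    (hAG : A ⊆ G) (hinf : ∀ K ⊆ G \ A, IsCompact K → ∃ c > (0 : ℝ), ∀ z ∈ K, c ≤ v z)
    (hF : ∀ n, DifferentiableOn ℂ (F n) G) (hC : HvCauchy G v F) {K : Set ℂ} (hKG : K ⊆ G)
    (hK : IsCompact K) : UniformCauchySeqOn F atTop K := by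
  obtain ⟨U, hUo, hAU, hUG, hUc⟩ := exists_open_between_and_isCompact_closure hA hG hAG
  have hfrontier : frontier U ⊆ G \ A := fun z hz => by
    rw [hUo.frontier_eq] at hz
    exact ⟨hUG hz.1, fun hzA => hz.2 (hAU hzA)⟩
  have hS : (K \ U) ∪ frontier U ⊆ G \ A :=
    union_subset (fun z hz => ⟨hKG hz.1, fun hzA => hz.2 (hAU hzA)⟩) hfrontier
  obtain ⟨c, hc, hcS⟩ := hinf _ hS
    ((hK.diff hUo).union (hUc.of_isClosed_subset isClosed_frontier frontier_subset_closure))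
  have hCS := hC.uniformCauchySeqOn (hS.trans sdiff_subset) hc hcS
  have hCU := uniformCauchySeqOn_closure_of_frontier (hUc.isBounded.subset subset_closure)
    (fun n => ((hF n).mono hUG).diffContOnCl) (hCS.mono subset_union_right)
  refine ((hCS.mono subset_union_left).union hCU).mono fun z hz => ?_
  by_cases hzU : z ∈ U
  · exact Or.inr (subset_closure hzU)
  · exact Or.inl ⟨hz, hzU⟩

end Hv

theorem stmt15 (G : Set ℂ) (v : ℂ → ℝ) (hG : IsOpen G) (hGc : IsConnected G)
    (hv : ∀ z ∈ G, 0 ≤ v z)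
    (hcomp : IsCompact (closure (G \ {w ∈ G | 0 < v w})))
    (hsub : closure (G \ {w ∈ G | 0 < v w}) ⊆ G)
    (hinf : ∀ K ⊆ G \ closure (G \ {w ∈ G | 0 < v w}), IsCompact K →
      ∃ c > (0:ℝ), ∀ z ∈ K, c ≤ v z) :
    IsBanachHv G v := by
  set A := closure (G \ {w ∈ G | 0 < v w})
  have hvpos : ∀ z ∈ G \ A, 0 < v z := fun z hz => by
    by_contra h
    exact hz.2 (subset_closure ⟨hz.1, fun hw => h hw.2⟩)
  exact ⟨hvNormed_of_pos_on_isOpen hG hGc.isPreconnected (hG.sdiff isClosed_closure)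
      (diff_nonempty_of_isCompact hG hGc.nonempty hcomp hsub) sdiff_subset hvpos,
    hvComplete_of_uniformCauchySeqOn hG hv fun F hF hC _ hKG hK =>
      hC.uniformCauchySeqOn_of_isCompact hG hcomp hsub hinf hF hKG hK⟩
end
end
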